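/- Let Θ, Θ̃ : [0,∞) → ℝ^N be two solutions of the inertial Kuramoto model for N identical oscillators with all-to-all coupling (parameters m, γ, κ > 0), with Σ_i θ_i(0) = Σ_i θ̃_i(0) = 0 and Σ_i ω_i(0) = Σ_i ω̃_i(0) = 0. Suppose γ > 1/2 and that there exists S ∈ (0, π) with D(Θ(t)) + D(Θ̃(t)) ≤ S for all t ≥ 0; set Γ̃ := sin(S)/S, and let ε satisfy κ/(2Γ̃) < ε < (2γ − 1)/(2m). Then, with X := Θ − Θ̃, V := Ω − Ω̃ and E_ε(t) := ε·γ·‖X(t)‖² + 2mε·⟨X(t), V(t)⟩ + m·‖V(t)‖², there exists a constant C₃ > 0 such that E_ε(t) ≤ E_ε(0)·e^{−C₃·t} for all t ≥ 0. -/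

import Mathlib

/-!
The differences `x = Θ - Θ̃`, `v = Ω - Ω̃` solve `m v' = -γ v + F`, where
`Fᵢ = κ/N ∑ⱼ (sin (θⱼ - θᵢ) - sin (θ̃ⱼ - θ̃ᵢ))` sums to zero, so `x` and `v` keep mean zero.
Along the flow `E_ε' = -2 (γ - m ε) ‖v‖² + 2 ε ⟨x, F⟩ + 2 ⟨v, F⟩`. Symmetrising over pairs `(i, j)`,
concavity of `sin` on `[0, π]` together with the diameter bound gives `⟨x, F⟩ ≤ -κ Γ̃ ‖x‖²`, and
`sin` being 1-Lipschitz gives `⟨v, F⟩ ≤ κ ‖x‖ ‖v‖`. The two bounds on `ε` make the resulting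
quadratic form in `(‖x‖, ‖v‖)` negative definite, so `E_ε' ≤ -c (‖x‖² + ‖v‖²) ≤ -(c / M) E_ε`
with `E_ε ≤ M (‖x‖² + ‖v‖²)`, and Grönwall's inequality concludes.
-/

/-- The phase diameter of a configuration `Θ : Fin N → ℝ`:
`D(Θ) = max_{i,j} (Θ_i − Θ_j)`. -/
noncomputable def phaseDiam {N : ℕ} (Θ : Fin N → ℝ) : ℝ :=
  ⨆ p : Fin N × Fin N, (Θ p.1 - Θ p.2)

open Real Finset

theorem sin_div_mul_le_sin {c x : ℝ} (hc : 0 < c) (hcπ : c ≤ π) (hx : 0 ≤ x) (hxc : x ≤ c) :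
    sin c / c * x ≤ sin x := by
  rw [div_mul_comm]
  simpa [div_mul_cancel₀ x hc.ne'] using
    strictConcaveOn_sin_Icc.concaveOn.2 ⟨hc.le, hcπ⟩ ⟨le_rfl, pi_pos.le⟩
      (div_nonneg hx hc.le) (sub_nonneg.2 ((div_le_one hc).2 hxc)) (add_sub_cancel _ _)

theorem sin_div_mul_sq_le_mul_sin {c x : ℝ} (hc : 0 < c) (hcπ : c ≤ π) (hx : |x| ≤ c) :
    sin c / c * x ^ 2 ≤ x * sin x := by
  have h := mul_le_mul_of_nonneg_right (sin_div_mul_le_sin hc hcπ (abs_nonneg x) hx) (abs_nonneg x)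
  rcases abs_cases x with ⟨hx', -⟩ | ⟨hx', -⟩ <;> rw [hx'] at h
  · nlinarith
  · rw [sin_neg] at h; nlinarith

theorem sin_div_mul_sq_le_mul_sin_sub_sin {S a b : ℝ} (hS : 0 < S) (hSπ : S < π)
    (hab : |a| + |b| ≤ S) : sin S / S * (a - b) ^ 2 ≤ (a - b) * (sin a - sin b) := by
  have hd : |(a - b) / 2| ≤ S / 2 := by
    rw [abs_div, abs_two]; linarith [abs_sub a b]
  have hu : |(a + b) / 2| ≤ S / 2 := by
    rw [abs_div, abs_two]; linarith [abs_add_le a b]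
  have hcos : cos (S / 2) ≤ cos ((a + b) / 2) := by
    rw [← cos_abs ((a + b) / 2)]
    exact cos_le_cos_of_nonneg_of_le_pi (abs_nonneg _) (by linarith) hu
  have hcos_pos : 0 < cos (S / 2) := cos_pos_of_mem_Ioo ⟨by linarith, by linarith⟩
  have hsin := sin_div_mul_sq_le_mul_sin (half_pos hS) (by linarith) hd
  have hsin_nonneg : 0 ≤ (a - b) / 2 * sin ((a - b) / 2) :=
    le_trans (by have := sin_pos_of_pos_of_lt_pi (half_pos hS) (by linarith); positivity) hsin
  -- `sin a - sin b = 2 sin ((a - b) / 2) cos ((a + b) / 2)` and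
  -- `sin S / S = sin (S / 2) / (S / 2) * cos (S / 2)`
  calc sin S / S * (a - b) ^ 2
      = 4 * (sin (S / 2) / (S / 2) * ((a - b) / 2) ^ 2) * cos (S / 2) := by
        rw [show S = 2 * (S / 2) by ring, sin_two_mul]; field_simp; ring
    _ ≤ 4 * ((a - b) / 2 * sin ((a - b) / 2)) * cos ((a + b) / 2) := by gcongr
    _ = (a - b) * (sin a - sin b) := by rw [sin_sub_sin]; ring

theorem ContDiff.hasDerivAt_deriv {f : ℝ → ℝ} (hf : ContDiff ℝ 2 f) (t : ℝ) :
    HasDerivAt (deriv f) (deriv (deriv f) t) t :=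
  ((contDiff_succ_iff_deriv.1 hf).2.2.differentiable one_ne_zero t).hasDerivAt

theorem le_mul_exp_of_hasDerivAt_le {f f' : ℝ → ℝ} {C : ℝ}
    (hf : ∀ t ≥ 0, HasDerivAt f (f' t) t) (hle : ∀ t ≥ 0, f' t ≤ -C * f t) {t : ℝ} (ht : 0 ≤ t) :
    f t ≤ f 0 * exp (-C * t) := by
  have h := le_gronwallBound_of_liminf_deriv_right_le (f' := f') (K := -C) (ε := 0) (b := t)
    (fun s hs => (hf s hs.1).continuousAt.continuousWithinAt)
    (fun s hs _ hr => (hf s hs.1).hasDerivWithinAt.liminf_right_slope_le hr) le_rfl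
    (fun s hs => (add_zero (-C * f s)).symm ▸ hle s hs.1) t ⟨ht, le_rfl⟩
  rwa [gronwallBound_ε0, sub_zero] at h

theorem eq_zero_of_hasDerivAt_mul_self {f : ℝ → ℝ} {c : ℝ}
    (hf : ∀ t ≥ 0, HasDerivAt f (c * f t) t) (h0 : f 0 = 0) {t : ℝ} (ht : 0 ≤ t) : f t = 0 :=
  eq_zero_of_abs_deriv_le_mul_abs_self_of_eq_zero_right (K := |c|)
    (fun s hs => (hf s hs.1).continuousAt.continuousWithinAt)
    (fun s hs => (hf s hs.1).hasDerivWithinAt) h0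
    (fun s _ => by rw [norm_mul, Real.norm_eq_abs]) t ⟨ht, le_rfl⟩

theorem exists_pos_mul_add_le_of_sq_lt {A B k : ℝ} (hAB : 0 < A + B) (hk : k ^ 2 < A * B) :
    ∃ c > 0, ∀ a b : ℝ, 2 * k * a * b + c * (a ^ 2 + b ^ 2) ≤ A * a ^ 2 + B * b ^ 2 := by
  refine ⟨(A * B - k ^ 2) / (A + B), div_pos (by linarith) hAB, fun a b => ?_⟩
  suffices h : (A * B - k ^ 2) / (A + B) * (a ^ 2 + b ^ 2)
      ≤ A * a ^ 2 + B * b ^ 2 - 2 * k * a * b by linarith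
  rw [div_mul_eq_mul_div, div_le_iff₀ hAB]
  -- the difference of the two sides is `(A a - k b)² + (B b - k a)²`
  nlinarith [sq_nonneg (A * a - k * b), sq_nonneg (B * b - k * a)]

section

variable {ι : Type*} [Fintype ι]

theorem sum_sum_sub_sq (y : ι → ℝ) :
    ∑ i, ∑ j, (y j - y i) ^ 2 = 2 * Fintype.card ι * ∑ i, y i ^ 2 - 2 * (∑ i, y i) ^ 2 := by
  have h : ∀ i j, (y j - y i) ^ 2 = y j ^ 2 + y i ^ 2 - 2 * y i * y j := fun i j => by ring
  simp only [h, sum_add_distrib, sum_sub_distrib, sum_const, card_univ, nsmul_eq_mul, mul_assoc,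
    ← mul_sum, sq (∑ i, y i), sum_mul_sum]
  ring

theorem sum_sum_sub_sq_le (y : ι → ℝ) :
    ∑ i, ∑ j, (y j - y i) ^ 2 ≤ 2 * Fintype.card ι * ∑ i, y i ^ 2 := by
  rw [sum_sum_sub_sq]
  linarith [sq_nonneg (∑ i, y i)]

theorem sum_mul_sum_of_antisymm (y : ι → ℝ) {z : ι → ι → ℝ} (hz : ∀ i j, z j i = -z i j) :
    ∑ i, y i * ∑ j, z i j = -(1 / 2) * ∑ i, ∑ j, (y j - y i) * z i j := by
  have hswap : ∑ i, ∑ j, y j * z i j = -∑ i, y i * ∑ j, z i j := by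
    rw [sum_comm, ← sum_neg_distrib]
    exact sum_congr rfl fun i _ => by simp only [hz i, mul_neg, sum_neg_distrib, mul_sum]
  simp only [sub_mul, sum_sub_distrib, hswap, mul_sum]
  ring

noncomputable def kuramotoForce (κ : ℝ) (Θ : ι → ℝ) (i : ι) : ℝ :=
  κ / Fintype.card ι * ∑ j, sin (Θ j - Θ i)

theorem sum_kuramotoForce (κ : ℝ) (Θ : ι → ℝ) : ∑ i, kuramotoForce κ Θ i = 0 := by
  have h := sum_mul_sum_of_antisymm (fun _ => (1 : ℝ)) (z := fun i j => sin (Θ j - Θ i))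
    fun i j => by rw [← sin_neg, neg_sub]
  simp only [one_mul, sub_self, zero_mul, sum_const_zero, mul_zero] at h
  simp only [kuramotoForce, ← mul_sum, h, mul_zero]

theorem sum_mul_kuramotoForce_sub (κ : ℝ) (y Θ Θ' : ι → ℝ) :
    ∑ i, y i * (kuramotoForce κ Θ i - kuramotoForce κ Θ' i)
      = -(κ / (2 * Fintype.card ι)) *
          ∑ i, ∑ j, (y j - y i) * (sin (Θ j - Θ i) - sin (Θ' j - Θ' i)) := by
  have h := sum_mul_sum_of_antisymm y (z := fun i j => sin (Θ j - Θ i) - sin (Θ' j - Θ' i))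
    fun i j => by rw [← neg_sub (Θ j), ← neg_sub (Θ' j), sin_neg, sin_neg]; ring
  simp only [kuramotoForce, ← mul_sub, ← sum_sub_distrib] at h ⊢
  calc ∑ i, y i * (κ / Fintype.card ι * ∑ j, (sin (Θ j - Θ i) - sin (Θ' j - Θ' i)))
      = κ / Fintype.card ι * ∑ i, y i * ∑ j, (sin (Θ j - Θ i) - sin (Θ' j - Θ' i)) := by
        rw [mul_sum]; exact sum_congr rfl fun i _ => by ring
    _ = _ := by rw [h]; ring

theorem sum_sub_mul_kuramotoForce_sub_le {κ S : ℝ} (hκ : 0 ≤ κ) (hS : 0 < S) (hSπ : S < π)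
    (Θ Θ' : ι → ℝ) (hD : ∀ i j, |Θ j - Θ i| + |Θ' j - Θ' i| ≤ S)
    (hsum : ∑ i, (Θ i - Θ' i) = 0) :
    ∑ i, (Θ i - Θ' i) * (kuramotoForce κ Θ i - kuramotoForce κ Θ' i)
      ≤ -(κ * (sin S / S)) * ∑ i, (Θ i - Θ' i) ^ 2 := by
  rcases isEmpty_or_nonempty ι with _ | _
  · simp
  have hN : (0 : ℝ) < Fintype.card ι := by exact_mod_cast Fintype.card_pos
  have hpair : ∀ i j, sin S / S * ((Θ j - Θ' j) - (Θ i - Θ' i)) ^ 2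
      ≤ ((Θ j - Θ' j) - (Θ i - Θ' i)) * (sin (Θ j - Θ i) - sin (Θ' j - Θ' i)) := fun i j => by
    have h := sin_div_mul_sq_le_mul_sin_sub_sin hS hSπ (hD i j)
    rwa [show Θ j - Θ i - (Θ' j - Θ' i) = (Θ j - Θ' j) - (Θ i - Θ' i) by ring] at h
  have hsum_pairs := sum_le_sum fun i (_ : i ∈ univ) => sum_le_sum fun j (_ : j ∈ univ) => hpair i j
  have hsq := sum_sum_sub_sq fun i => Θ i - Θ' i
  simp only [← mul_sum] at hsum_pairs
  rw [hsq, hsum] at hsum_pairs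
  rw [sum_mul_kuramotoForce_sub]
  calc _ ≤ -(κ / (2 * Fintype.card ι)) *
        (sin S / S * (2 * Fintype.card ι * ∑ i, (Θ i - Θ' i) ^ 2 - 2 * 0 ^ 2)) :=
        mul_le_mul_of_nonpos_left hsum_pairs (neg_nonpos.2 (by positivity))
    _ = _ := by field_simp; ring

theorem sum_mul_kuramotoForce_sub_le {κ : ℝ} (hκ : 0 ≤ κ) (v Θ Θ' : ι → ℝ) :
    ∑ i, v i * (kuramotoForce κ Θ i - kuramotoForce κ Θ' i)
      ≤ κ * √(∑ i, (Θ i - Θ' i) ^ 2) * √(∑ i, v i ^ 2) := by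
  rcases isEmpty_or_nonempty ι with _ | _
  · simp
  rw [sum_mul_kuramotoForce_sub]
  have hN : (0 : ℝ) < Fintype.card ι := by exact_mod_cast Fintype.card_pos
  set N : ℝ := (Fintype.card ι : ℝ)
  have hlip : ∑ i, ∑ j, (sin (Θ j - Θ i) - sin (Θ' j - Θ' i)) ^ 2
      ≤ ∑ i, ∑ j, ((Θ j - Θ' j) - (Θ i - Θ' i)) ^ 2 :=
    sum_le_sum fun i _ => sum_le_sum fun j _ => sq_le_sq.2 <| by
      rw [show Θ j - Θ' j - (Θ i - Θ' i) = Θ j - Θ i - (Θ' j - Θ' i) by ring]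
      exact abs_sin_sub_sin_le _ _
  have hcs := Real.sum_mul_le_sqrt_mul_sqrt univ (fun p : ι × ι => -(v p.2 - v p.1))
    (fun p => sin (Θ p.2 - Θ p.1) - sin (Θ' p.2 - Θ' p.1))
  simp only [Fintype.sum_prod_type, neg_sq] at hcs
  calc _ = κ / (2 * N) * ∑ i, ∑ j, -(v j - v i) * (sin (Θ j - Θ i) - sin (Θ' j - Θ' i)) := by
        simp only [neg_mul, sum_neg_distrib, mul_neg]
    _ ≤ κ / (2 * N) * (√(2 * N * ∑ i, v i ^ 2) * √(2 * N * ∑ i, (Θ i - Θ' i) ^ 2)) := by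
        gcongr
        refine hcs.trans (mul_le_mul ?_ ?_ (sqrt_nonneg _) (sqrt_nonneg _))
        · exact sqrt_le_sqrt (sum_sum_sub_sq_le v)
        · exact sqrt_le_sqrt (hlip.trans (sum_sum_sub_sq_le fun i => Θ i - Θ' i))
    _ = _ := by
        rw [sqrt_mul (by positivity : (0 : ℝ) ≤ 2 * N), sqrt_mul (by positivity : (0 : ℝ) ≤ 2 * N)]
        field_simp
        rw [sq_sqrt (by positivity)]
        ring

def lyapunovFunctional (m γ ε : ℝ) (x v : ι → ℝ) : ℝ :=
  ε * γ * ∑ i, x i ^ 2 + 2 * m * ε * ∑ i, x i * v i + m * ∑ i, v i ^ 2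

variable {m γ : ℝ} {x v w F : ℝ → ι → ℝ}

theorem hasDerivAt_lyapunovFunctional (ε : ℝ) {t : ℝ}
    (hx : ∀ i, HasDerivAt (fun s => x s i) (v t i) t)
    (hv : ∀ i, HasDerivAt (fun s => v s i) (w t i) t)
    (hode : ∀ i, m * w t i = -γ * v t i + F t i) :
    HasDerivAt (fun s => lyapunovFunctional m γ ε (x s) (v s))
      (2 * (m * ε - γ) * ∑ i, v t i ^ 2 + 2 * ε * ∑ i, x t i * F t i
        + 2 * ∑ i, v t i * F t i) t := by
  have hxx := HasDerivAt.fun_sum (u := univ) fun i _ => (hx i).fun_mul (hx i)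
  have hxv := HasDerivAt.fun_sum (u := univ) fun i _ => (hx i).fun_mul (hv i)
  have hvv := HasDerivAt.fun_sum (u := univ) fun i _ => (hv i).fun_mul (hv i)
  have hxw : m * ∑ i, x t i * w t i = -γ * ∑ i, x t i * v t i + ∑ i, x t i * F t i := by
    simp only [mul_sum, ← sum_add_distrib]
    exact sum_congr rfl fun i _ => by linear_combination x t i * hode i
  have hvw : m * ∑ i, v t i * w t i = -γ * ∑ i, v t i ^ 2 + ∑ i, v t i * F t i := by
    simp only [mul_sum, ← sum_add_distrib]
    exact sum_congr rfl fun i _ => by linear_combination v t i * hode i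
  simp only [← sq] at hxx hvv
  refine HasDerivAt.congr_deriv (f := fun s => lyapunovFunctional m γ ε (x s) (v s))
    (((hxx.const_mul (ε * γ)).add (hxv.const_mul (2 * m * ε))).add (hvv.const_mul m)) ?_
  simp only [sum_add_distrib, ← sq]
  simp only [mul_comm (v t _) (x t _), mul_comm (w t _) (v t _)]
  linear_combination 2 * ε * hxw + 2 * hvw

theorem lyapunovFunctional_le (hm : 0 ≤ m) (hγ : 0 ≤ γ) {ε : ℝ} (hε : 0 ≤ ε) (x v : ι → ℝ) :
    lyapunovFunctional m γ ε x v ≤ (ε * γ + m * ε + m) * (∑ i, x i ^ 2 + ∑ i, v i ^ 2) := by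
  have hxv : 2 * ∑ i, x i * v i ≤ ∑ i, x i ^ 2 + ∑ i, v i ^ 2 := by
    rw [mul_sum, ← sum_add_distrib]
    exact sum_le_sum fun i _ => (mul_assoc 2 (x i) (v i)).symm ▸ two_mul_le_add_sq _ _
  have hx := sum_nonneg fun i (_ : i ∈ univ) => sq_nonneg (x i)
  have hv := sum_nonneg fun i (_ : i ∈ univ) => sq_nonneg (v i)
  unfold lyapunovFunctional
  nlinarith [mul_le_mul_of_nonneg_left hxv (mul_nonneg hm hε), mul_nonneg (mul_nonneg hε hγ) hv,
    mul_nonneg hm hx]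

theorem sum_eq_zero_of_sum_force_eq_zero (hm : m ≠ 0)
    (hx : ∀ t i, HasDerivAt (fun s => x s i) (v t i) t)
    (hv : ∀ t i, HasDerivAt (fun s => v s i) (w t i) t)
    (hode : ∀ t ≥ 0, ∀ i, m * w t i = -γ * v t i + F t i)
    (hF : ∀ t ≥ 0, ∑ i, F t i = 0) (hx0 : ∑ i, x 0 i = 0) (hv0 : ∑ i, v 0 i = 0) :
    ∀ t ≥ 0, ∑ i, x t i = 0 := by
  have hv_sum : ∀ t ≥ 0, ∑ i, v t i = 0 := fun t ht =>
    eq_zero_of_hasDerivAt_mul_self (f := fun s => ∑ i, v s i) (c := -γ / m) (fun s hs => by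
      refine (HasDerivAt.fun_sum (u := univ) fun i _ => hv s i).congr_deriv ?_
      have h : m * ∑ i, w s i = -γ * ∑ i, v s i := by
        rw [mul_sum, sum_congr rfl fun i _ => hode s hs i, sum_add_distrib, hF s hs, mul_sum,
          add_zero]
      field_simp
      linear_combination h) hv0 ht
  exact fun t ht => eq_zero_of_hasDerivAt_mul_self (c := 0) (fun s hs => by
    simpa [hv_sum s hs] using HasDerivAt.fun_sum (u := univ) fun i _ => hx s i) hx0 ht

theorem exists_lyapunovFunctional_le_mul_exp {ε a κ : ℝ} (hm : 0 < m) (hε : 0 < ε)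
    (hmε : m * ε < γ) (hκ : κ ^ 2 < 4 * (ε * a) * (γ - m * ε))
    (hx : ∀ t i, HasDerivAt (fun s => x s i) (v t i) t)
    (hv : ∀ t i, HasDerivAt (fun s => v s i) (w t i) t)
    (hode : ∀ t ≥ 0, ∀ i, m * w t i = -γ * v t i + F t i)
    (hFx : ∀ t ≥ 0, ∑ i, x t i * F t i ≤ -a * ∑ i, x t i ^ 2)
    (hFv : ∀ t ≥ 0, ∑ i, v t i * F t i ≤ κ * √(∑ i, x t i ^ 2) * √(∑ i, v t i ^ 2)) :
    ∃ C > 0, ∀ t ≥ 0, lyapunovFunctional m γ ε (x t) (v t)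
      ≤ lyapunovFunctional m γ ε (x 0) (v 0) * exp (-C * t) := by
  have hγ : 0 < γ := (mul_pos hm hε).trans hmε
  have hεa : 0 < ε * a := by nlinarith [sq_nonneg κ]
  obtain ⟨c, hc, hquad⟩ := exists_pos_mul_add_le_of_sq_lt (A := 2 * (ε * a)) (B := 2 * (γ - m * ε))
    (k := κ) (by linarith) (by linarith)
  set M := ε * γ + m * ε + m
  have hM : 0 < M := by positivity
  refine ⟨c / M, div_pos hc hM, fun t ht => le_mul_exp_of_hasDerivAt_le
    (fun s hs => hasDerivAt_lyapunovFunctional ε (hx s) (hv s) (hode s hs)) (fun s hs => ?_) ht⟩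
  set P := ∑ i, x s i ^ 2
  set Q := ∑ i, v s i ^ 2
  have hP : √P ^ 2 = P := sq_sqrt (sum_nonneg fun i (_ : i ∈ univ) => sq_nonneg (x s i))
  have hQ : √Q ^ 2 = Q := sq_sqrt (sum_nonneg fun i (_ : i ∈ univ) => sq_nonneg (v s i))
  have hE : c / M * lyapunovFunctional m γ ε (x s) (v s) ≤ c * (P + Q) := by
    rw [div_mul_eq_mul_div, div_le_iff₀ hM]
    nlinarith [lyapunovFunctional_le hm.le hγ.le hε.le (x s) (v s)]
  calc 2 * (m * ε - γ) * Q + 2 * ε * ∑ i, x s i * F s i + 2 * ∑ i, v s i * F s i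
      ≤ 2 * (m * ε - γ) * Q + 2 * ε * (-a * P) + 2 * (κ * √P * √Q) := by
        gcongr
        exacts [hFx s hs, hFv s hs]
    _ ≤ -c * (P + Q) := by nlinarith [hquad √P √Q]
    _ ≤ -(c / M) * lyapunovFunctional m γ ε (x s) (v s) := by linarith
end

theorem abs_sub_le_phaseDiam {N : ℕ} (Θ : Fin N → ℝ) (i j : Fin N) : |Θ j - Θ i| ≤ phaseDiam Θ := by
  have hbdd : BddAbove (Set.range fun p : Fin N × Fin N => Θ p.1 - Θ p.2) :=
    (Set.finite_range _).bddAbove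
  rw [abs_sub_le_iff]
  exact ⟨le_ciSup hbdd (j, i), le_ciSup hbdd (i, j)⟩

theorem kuramoto_inertia_lyapunov_exponential_decay_general
    (N : ℕ)
    (m γ κ : ℝ) (hm : 0 < m) (hκ : 0 < κ)
    (θ θt : ℝ → Fin N → ℝ)
    (hreg : ∀ i, ContDiff ℝ 2 (fun t => θ t i))
    (hregt : ∀ i, ContDiff ℝ 2 (fun t => θt t i))
    (hode : ∀ t ≥ (0:ℝ), ∀ i,
      m * deriv (deriv (fun s => θ s i)) t
        = -γ * deriv (fun s => θ s i) t
          + (κ / N) * ∑ j, Real.sin (θ t j - θ t i))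
    (hodet : ∀ t ≥ (0:ℝ), ∀ i,
      m * deriv (deriv (fun s => θt s i)) t
        = -γ * deriv (fun s => θt s i) t
          + (κ / N) * ∑ j, Real.sin (θt t j - θt t i))
    (hθ0 : ∑ i, θ 0 i = 0) (hθt0 : ∑ i, θt 0 i = 0)
    (hω0 : ∑ i, deriv (fun s => θ s i) 0 = 0)
    (hωt0 : ∑ i, deriv (fun s => θt s i) 0 = 0)
    (S : ℝ) (hS0 : 0 < S) (hSπ : S < Real.pi)
    (hD : ∀ t ≥ (0:ℝ), phaseDiam (θ t) + phaseDiam (θt t) ≤ S)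
    (Γt : ℝ) (hΓt : Γt = Real.sin S / S)
    (ε : ℝ) (hε1 : κ / (2 * Γt) < ε) (hε2 : ε < (2 * γ - 1) / (2 * m))
    (X V : ℝ → Fin N → ℝ)
    (hX : X = fun t i => θ t i - θt t i)
    (hV : V = fun t i =>
      deriv (fun s => θ s i) t - deriv (fun s => θt s i) t)
    (Eε : ℝ → ℝ)
    (hEε : Eε = fun t =>
      ε * γ * (∑ i, (X t i) ^ 2) + 2 * m * ε * (∑ i, X t i * V t i)
        + m * (∑ i, (V t i) ^ 2)) :
    ∃ C₃ > (0:ℝ), ∀ t ≥ (0:ℝ), Eε t ≤ Eε 0 * Real.exp (-C₃ * t) := by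
  subst hX hV hEε hΓt
  have hΓ : 0 < sin S / S := div_pos (sin_pos_of_pos_of_lt_pi hS0 hSπ) hS0
  have hε : 0 < ε := (div_pos hκ (by positivity)).trans hε1
  have hmε : 2 * (m * ε) < 2 * γ - 1 := by rw [lt_div_iff₀ (by positivity)] at hε2; linarith
  have hκε : κ < 2 * ε * (sin S / S) := by
    have := (div_lt_iff₀ (by positivity)).1 hε1; linarith
  have hx : ∀ t i, HasDerivAt (fun s => θ s i - θt s i)
      (deriv (fun s => θ s i) t - deriv (fun s => θt s i) t) t := fun t i =>
    ((hreg i).differentiable two_ne_zero t).hasDerivAt.sub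
      ((hregt i).differentiable two_ne_zero t).hasDerivAt
  have hv : ∀ t i, HasDerivAt (fun s => deriv (fun s => θ s i) s - deriv (fun s => θt s i) s)
      (deriv (deriv fun s => θ s i) t - deriv (deriv fun s => θt s i) t) t := fun t i =>
    ((hreg i).hasDerivAt_deriv t).sub ((hregt i).hasDerivAt_deriv t)
  have hode' : ∀ t ≥ 0, ∀ i, m * (deriv (deriv fun s => θ s i) t - deriv (deriv fun s => θt s i) t)
      = -γ * (deriv (fun s => θ s i) t - deriv (fun s => θt s i) t)
        + (kuramotoForce κ (θ t) i - kuramotoForce κ (θt t) i) := fun t ht i => by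
    simp only [kuramotoForce, Fintype.card_fin]
    linear_combination hode t ht i - hodet t ht i
  have hsum := sum_eq_zero_of_sum_force_eq_zero hm.ne' hx hv hode'
    (fun t _ => by rw [sum_sub_distrib, sum_kuramotoForce, sum_kuramotoForce, sub_zero])
    (by rw [sum_sub_distrib, hθ0, hθt0, sub_zero]) (by rw [sum_sub_distrib, hω0, hωt0, sub_zero])
  have hpairs : ∀ t ≥ 0, ∀ i j, |θ t j - θ t i| + |θt t j - θt t i| ≤ S := fun t ht i j => by
    linarith [abs_sub_le_phaseDiam (θ t) i j, abs_sub_le_phaseDiam (θt t) i j, hD t ht]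
  exact exists_lyapunovFunctional_le_mul_exp (a := κ * (sin S / S)) hm hε (by linarith)
    (by nlinarith [mul_lt_mul_of_pos_left hκε hκ]) hx hv hode'
    (fun t ht => sum_sub_mul_kuramotoForce_sub_le hκ.le hS0 hSπ _ _ (hpairs t ht) (hsum t ht))
    (fun t _ => sum_mul_kuramotoForce_sub_le hκ.le _ _ _)

/-- Exponential decay of the Lyapunov functional for the
difference of two solutions of the inertial Kuramoto model for identical
oscillators with all-to-all coupling: for `ε ∈ (κ/(2Γ̃), (2γ−1)/(2m))` there
exists `C₃ > 0` with `E_ε(t) ≤ E_ε(0)·e^{−C₃t}` for all `t ≥ 0`. -/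
theorem kuramoto_inertia_lyapunov_exponential_decay
    (N : ℕ) (hN : 1 ≤ N)
    (m γ κ : ℝ) (hm : 0 < m) (hγpos : 0 < γ) (hκ : 0 < κ)
    (θ θt : ℝ → Fin N → ℝ)
    (hreg : ∀ i, ContDiff ℝ 2 (fun t => θ t i))
    (hregt : ∀ i, ContDiff ℝ 2 (fun t => θt t i))
    (hode : ∀ t ≥ (0:ℝ), ∀ i,
      m * deriv (deriv (fun s => θ s i)) t
        = -γ * deriv (fun s => θ s i) t
          + (κ / N) * ∑ j, Real.sin (θ t j - θ t i))
    (hodet : ∀ t ≥ (0:ℝ), ∀ i,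
      m * deriv (deriv (fun s => θt s i)) t
        = -γ * deriv (fun s => θt s i) t
          + (κ / N) * ∑ j, Real.sin (θt t j - θt t i))
    (hθ0 : ∑ i, θ 0 i = 0) (hθt0 : ∑ i, θt 0 i = 0)
    (hω0 : ∑ i, deriv (fun s => θ s i) 0 = 0)
    (hωt0 : ∑ i, deriv (fun s => θt s i) 0 = 0)
    (hγ : 1 / 2 < γ)
    (S : ℝ) (hS0 : 0 < S) (hSπ : S < Real.pi)
    (hD : ∀ t ≥ (0:ℝ), phaseDiam (θ t) + phaseDiam (θt t) ≤ S)
    (Γt : ℝ) (hΓt : Γt = Real.sin S / S)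
    (ε : ℝ) (hε1 : κ / (2 * Γt) < ε) (hε2 : ε < (2 * γ - 1) / (2 * m))
    (X V : ℝ → Fin N → ℝ)
    (hX : X = fun t i => θ t i - θt t i)
    (hV : V = fun t i =>
      deriv (fun s => θ s i) t - deriv (fun s => θt s i) t)
    (Eε : ℝ → ℝ)
    (hEε : Eε = fun t =>
      ε * γ * (∑ i, (X t i) ^ 2) + 2 * m * ε * (∑ i, X t i * V t i)
        + m * (∑ i, (V t i) ^ 2)) :
    ∃ C₃ > (0:ℝ), ∀ t ≥ (0:ℝ), Eε t ≤ Eε 0 * Real.exp (-C₃ * t) :=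
  kuramoto_inertia_lyapunov_exponential_decay_general N m γ κ hm hκ θ θt hreg hregt hode hodet hθ0
    hθt0 hω0 hωt0 S hS0 hSπ hD Γt hΓt ε hε1 hε2 X V hX hV Eε hEε
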